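/- arXiv:1311.2879 — 4 statements merged into one kernel-verified Lean document; each statement's English description precedes it below -/
import Mathlib

section
/- For the single-machine common due date problem with a fixed job sequence and no idle time, there exists an optimal start time s* such that either s* = 0 (the first job starts at time 0) or some job completes exactly at the due date D (i.e., s* + Σ_{j≤i} P_j = D for some i). -/
/-!
Shifting the start time by `x` turns the objective into a sum of hinge functions
`a * max 0 (k - x) + b * max 0 (x - k)` with kinks at `k = D - Σ_{j≤i} P_j`. Such a sum is affine
between consecutive kinks, so on each kink-free interval it is at least its value at one of the
endpoints, and it is nondecreasing beyond the last kink because the tardiness weights are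
nonnegative. Hence its minimum over `[0, ∞)` is attained at `0` or at a nonnegative kink, i.e.
at a start time where some job completes exactly at `D`.
-/

open Finset

section Hinge

variable (a b k : ℝ)

def hinge (x : ℝ) : ℝ := a * max 0 (k - x) + b * max 0 (x - k)

variable {a b k}

lemma hinge_of_le {x : ℝ} (hx : x ≤ k) : hinge a b k x = a * (k - x) := by
  rw [hinge, max_eq_right (by linarith), max_eq_left (by linarith), mul_zero, add_zero]

lemma hinge_of_ge {x : ℝ} (hx : k ≤ x) : hinge a b k x = b * (x - k) := by
  rw [hinge, max_eq_left (by linarith), max_eq_right (by linarith), mul_zero, zero_add]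

lemma hinge_interpolate {x y z : ℝ} (hxy : x ≤ y) (hyz : y ≤ z) (hk : k ≤ x ∨ z ≤ k) :
    (z - x) * hinge a b k y = (z - y) * hinge a b k x + (y - x) * hinge a b k z := by
  rcases hk with hk | hk
  · rw [hinge_of_ge hk, hinge_of_ge (hk.trans hxy), hinge_of_ge (hk.trans (hxy.trans hyz))]
    ring
  · rw [hinge_of_le hk, hinge_of_le (hyz.trans hk), hinge_of_le ((hxy.trans hyz).trans hk)]
    ring

lemma hinge_mono_of_ge (hb : 0 ≤ b) {x y : ℝ} (hk : k ≤ x) (hxy : x ≤ y) :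
    hinge a b k x ≤ hinge a b k y := by
  rw [hinge_of_ge hk, hinge_of_ge (hk.trans hxy)]
  exact mul_le_mul_of_nonneg_left (by linarith) hb

end Hinge

section HingeSum

variable {ι : Type*} (s : Finset ι) (a b k : ι → ℝ)

def hingeSum (x : ℝ) : ℝ := ∑ i ∈ s, hinge (a i) (b i) (k i) x

noncomputable def hingeCandidates : Finset ℝ := insert 0 ((s.image k).filter (0 ≤ ·))

variable {s a b k}

lemma zero_mem_hingeCandidates : (0 : ℝ) ∈ hingeCandidates s k := mem_insert_self _ _

lemma kink_mem_hingeCandidates {i : ι} (hi : i ∈ s) (hk : 0 ≤ k i) :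
    k i ∈ hingeCandidates s k :=
  mem_insert_of_mem (mem_filter.mpr ⟨mem_image_of_mem k hi, hk⟩)

lemma nonneg_of_mem_hingeCandidates {x : ℝ} (hx : x ∈ hingeCandidates s k) : 0 ≤ x := by
  rcases mem_insert.mp hx with rfl | hx
  · exact le_rfl
  · exact (mem_filter.mp hx).2

lemma eq_zero_or_exists_kink_of_mem_hingeCandidates {x : ℝ} (hx : x ∈ hingeCandidates s k) :
    x = 0 ∨ ∃ i ∈ s, k i = x := by
  rcases mem_insert.mp hx with hx | hx
  · exact Or.inl hx
  · exact Or.inr (mem_image.mp (mem_filter.mp hx).1)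

lemma min_le_hingeSum_of_no_kink {x y z : ℝ} (hxy : x ≤ y) (hyz : y ≤ z)
    (hk : ∀ i ∈ s, k i ≤ x ∨ z ≤ k i) :
    min (hingeSum s a b k x) (hingeSum s a b k z) ≤ hingeSum s a b k y := by
  rcases (hxy.trans hyz).eq_or_lt with rfl | hxz
  · exact (min_le_left _ _).trans (le_antisymm hxy hyz ▸ le_rfl)
  have interpolate : (z - x) * hingeSum s a b k y =
      (z - y) * hingeSum s a b k x + (y - x) * hingeSum s a b k z := by
    simp only [hingeSum, mul_sum, ← sum_add_distrib]
    exact sum_congr rfl fun i hi => hinge_interpolate hxy hyz (hk i hi)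
  refine le_of_mul_le_mul_left ?_ (sub_pos.mpr hxz)
  rw [interpolate]
  nlinarith [min_le_left (hingeSum s a b k x) (hingeSum s a b k z),
    min_le_right (hingeSum s a b k x) (hingeSum s a b k z)]

lemma hingeSum_mono_of_ge (hb : ∀ i ∈ s, 0 ≤ b i) {x y : ℝ} (hk : ∀ i ∈ s, k i ≤ x)
    (hxy : x ≤ y) : hingeSum s a b k x ≤ hingeSum s a b k y :=
  sum_le_sum fun i hi => hinge_mono_of_ge (hb i hi) (hk i hi) hxy

lemma exists_hingeCandidate_le (hb : ∀ i ∈ s, 0 ≤ b i) {t : ℝ} (ht : 0 ≤ t) :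
    ∃ c ∈ hingeCandidates s k, hingeSum s a b k c ≤ hingeSum s a b k t := by
  set T := hingeCandidates s k
  have hbelow : (T.filter (· ≤ t)).Nonempty :=
    ⟨0, mem_filter.mpr ⟨zero_mem_hingeCandidates, ht⟩⟩
  set x := (T.filter (· ≤ t)).max' hbelow
  obtain ⟨hxT, hxt⟩ := mem_filter.mp ((T.filter (· ≤ t)).max'_mem hbelow)
  have kink_above_x : ∀ i ∈ s, k i ≤ x ∨ t < k i ∧ k i ∈ T := by
    intro i hi
    by_cases hki : 0 ≤ k i
    · by_cases hkt : k i ≤ t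
      · exact Or.inl ((T.filter (· ≤ t)).le_max' _
          (mem_filter.mpr ⟨kink_mem_hingeCandidates hi hki, hkt⟩))
      · exact Or.inr ⟨lt_of_not_ge hkt, kink_mem_hingeCandidates hi hki⟩
    · exact Or.inl ((lt_of_not_ge hki).le.trans (nonneg_of_mem_hingeCandidates hxT))
  by_cases habove : (T.filter (t ≤ ·)).Nonempty
  · set z := (T.filter (t ≤ ·)).min' habove
    obtain ⟨hzT, htz⟩ := mem_filter.mp ((T.filter (t ≤ ·)).min'_mem habove)
    have no_kink : ∀ i ∈ s, k i ≤ x ∨ z ≤ k i := fun i hi =>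
      (kink_above_x i hi).imp_right fun ⟨hti, hiT⟩ =>
        (T.filter (t ≤ ·)).min'_le _ (mem_filter.mpr ⟨hiT, hti.le⟩)
    rcases min_le_iff.mp (min_le_hingeSum_of_no_kink (a := a) (b := b) hxt htz no_kink) with
      h | h
    · exact ⟨x, hxT, h⟩
    · exact ⟨z, hzT, h⟩
  · have no_kink : ∀ i ∈ s, k i ≤ x := fun i hi =>
      (kink_above_x i hi).resolve_right fun ⟨hti, hiT⟩ =>
        habove ⟨k i, mem_filter.mpr ⟨hiT, hti.le⟩⟩
    exact ⟨x, hxT, hingeSum_mono_of_ge hb no_kink hxt⟩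

theorem exists_isMinOn_hingeSum (hb : ∀ i ∈ s, 0 ≤ b i) :
    ∃ x, 0 ≤ x ∧ IsMinOn (hingeSum s a b k) (Set.Ici 0) x ∧
      (x = 0 ∨ ∃ i ∈ s, k i = x) := by
  obtain ⟨x, hxT, hmin⟩ :=
    (hingeCandidates s k).exists_min_image (hingeSum s a b k) ⟨0, zero_mem_hingeCandidates⟩
  refine ⟨x, nonneg_of_mem_hingeCandidates hxT, fun t ht => ?_,
    eq_zero_or_exists_kink_of_mem_hingeCandidates hxT⟩
  obtain ⟨c, hcT, hc⟩ := exists_hingeCandidate_le (a := a) hb (Set.mem_Ici.mp ht)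
  exact (hmin c hcT).trans hc

end HingeSum

theorem stmt4_general (n : ℕ) (P α β : ℕ → ℝ) (D : ℝ)
    (hβ : ∀ i, 1 ≤ i → i ≤ n → 0 < β i)
    (F : ℝ → ℝ)
    (hF : ∀ s : ℝ, F s = ∑ i ∈ Finset.Icc 1 n,
        (α i * max 0 (D - (s + ∑ l ∈ Finset.Icc 1 i, P l)) +
          β i * max 0 ((s + ∑ l ∈ Finset.Icc 1 i, P l) - D))) :
    ∃ s : ℝ, 0 ≤ s ∧ (∀ t : ℝ, 0 ≤ t → F s ≤ F t) ∧
      (s = 0 ∨ ∃ i ∈ Finset.Icc 1 n, s + ∑ l ∈ Finset.Icc 1 i, P l = D) := by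
  set S : ℕ → ℝ := fun i => ∑ l ∈ Finset.Icc 1 i, P l
  have hF_hinge : F = hingeSum (Icc 1 n) α β (fun i => D - S i) := by
    funext s
    rw [hF]
    refine sum_congr rfl fun i _ => ?_
    rw [hinge, show D - (s + S i) = D - S i - s by ring,
      show s + S i - D = s - (D - S i) by ring]
  have hβ_nonneg : ∀ i ∈ Icc 1 n, 0 ≤ β i := fun i hi =>
    (hβ i (mem_Icc.mp hi).1 (mem_Icc.mp hi).2).le
  obtain ⟨s, hs, hmin, hkink⟩ :=
    exists_isMinOn_hingeSum (a := α) (k := fun i => D - S i) hβ_nonneg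
  refine ⟨s, hs, fun t ht => hF_hinge ▸ hmin (Set.mem_Ici.mpr ht), hkink.imp_right ?_⟩
  rintro ⟨i, hi, rfl⟩
  exact ⟨i, hi, by ring⟩

/-- There is an optimal start time `s*` such that either `s* = 0`
or some job completes exactly at the due date. -/
theorem stmt4 (n : ℕ) (P α β : ℕ → ℝ) (D : ℝ)
    (hn : 1 ≤ n)
    (hP : ∀ i, 1 ≤ i → i ≤ n → 0 < P i)
    (hα : ∀ i, 1 ≤ i → i ≤ n → 0 < α i)
    (hβ : ∀ i, 1 ≤ i → i ≤ n → 0 < β i)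
    (hD : 0 < D)
    (F : ℝ → ℝ)
    (hF : ∀ s : ℝ, F s = ∑ i ∈ Finset.Icc 1 n,
        (α i * max 0 (D - (s + ∑ l ∈ Finset.Icc 1 i, P l)) +
          β i * max 0 ((s + ∑ l ∈ Finset.Icc 1 i, P l) - D))) :
    ∃ s : ℝ, 0 ≤ s ∧ (∀ t : ℝ, 0 ≤ t → F s ≤ F t) ∧
      (s = 0 ∨ ∃ i ∈ Finset.Icc 1 n, s + ∑ l ∈ Finset.Icc 1 i, P l = D) :=
  stmt4_general n P α β D hβ F hF
end

section
/- Suppose at start time s exactly the jobs 1,...,j−1 are early or on-time and jobs j,...,n are strictly tardy. Left-shifting by t ∈ (0, min{s, C_j(s) − D}] changes the penalty by t·(Σ_{i<j} α_i − Σ_{i≥j} β_i). In particular, the change is linear in t, so if any shift amount in this range improves the solution, the maximal shift min{s, C_j(s) − D} gives the greatest improvement. -/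
/-!
Write `penalty a b D C = a (D - C)⁺ + b (C - D)⁺` for the cost of a job completing at `C`.
A left shift by `t` keeps every early job early, and, as long as `t ≤ C_j(s) - D`, every tardy
job tardy or on time, because the completion times increase with the job index. On each of the
two blocks the penalty is affine in the completion time, with slope `-α i` resp. `β i`, so
`F (s - t) - F s` is `t` times the constant `∑_{i<j} α i - ∑_{i≥j} β i`. An improving shift
forces this constant to be negative, and then the largest admissible shift is best.
-/

open Finset

def penalty (a b D C : ℝ) : ℝ := a * max 0 (D - C) + b * max 0 (C - D)

lemma penalty_sub_of_le {a b D C t : ℝ} (hC : C ≤ D) (ht : 0 ≤ t) :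
    penalty a b D (C - t) = penalty a b D C + a * t := by
  simp only [penalty]
  rw [max_eq_right (by linarith), max_eq_left (by linarith), max_eq_right (by linarith),
    max_eq_left (by linarith)]
  ring

lemma penalty_sub_of_le_sub {a b D C t : ℝ} (hC : D ≤ C - t) (ht : 0 ≤ t) :
    penalty a b D (C - t) = penalty a b D C - b * t := by
  simp only [penalty]
  rw [max_eq_left (by linarith), max_eq_right (by linarith), max_eq_left (by linarith),
    max_eq_right (by linarith)]
  ring

section Blocks

variable {ι : Type*} (s : Finset ι) (α β C : ι → ℝ) {D t : ℝ}

lemma sum_penalty_sub_of_early (hC : ∀ i ∈ s, C i ≤ D) (ht : 0 ≤ t) :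
    ∑ i ∈ s, penalty (α i) (β i) D (C i - t) =
      ∑ i ∈ s, penalty (α i) (β i) D (C i) + t * ∑ i ∈ s, α i := by
  rw [mul_sum, ← sum_add_distrib]
  exact sum_congr rfl fun i hi => by rw [penalty_sub_of_le (hC i hi) ht, mul_comm t]

lemma sum_penalty_sub_of_tardy (hC : ∀ i ∈ s, D ≤ C i - t) (ht : 0 ≤ t) :
    ∑ i ∈ s, penalty (α i) (β i) D (C i - t) =
      ∑ i ∈ s, penalty (α i) (β i) D (C i) - t * ∑ i ∈ s, β i := by
  rw [mul_sum, ← sum_sub_distrib]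
  exact sum_congr rfl fun i hi => by rw [penalty_sub_of_le_sub (hC i hi) ht, mul_comm t]

end Blocks

lemma sum_Icc_eq_sum_Icc_add_sum_Icc {M : Type*} [AddCommMonoid M] (f : ℕ → M) {a m n : ℕ}
    (ham : a ≤ m + 1) (hmn : m ≤ n) :
    ∑ i ∈ Icc a n, f i = ∑ i ∈ Icc a m, f i + ∑ i ∈ Icc (m + 1) n, f i := by
  simp only [← Ico_add_one_right_eq_Icc]
  rw [sum_Ico_consecutive f ham (by omega)]

lemma sum_Icc_one_le_sum_Icc_one {P : ℕ → ℝ} {j i n : ℕ} (hP : ∀ l, 1 ≤ l → l ≤ n → 0 < P l)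
    (hji : j ≤ i) (hin : i ≤ n) :
    ∑ l ∈ Icc 1 j, P l ≤ ∑ l ∈ Icc 1 i, P l :=
  sum_le_sum_of_subset_of_nonneg (Icc_subset_Icc_right hji) fun l hl _ =>
    (hP l (mem_Icc.1 hl).1 ((mem_Icc.1 hl).2.trans hin)).le

lemma le_of_sub_eq_mul_of_exists_lt {F : ℝ → ℝ} {s T c : ℝ}
    (hF : ∀ t, 0 < t → t ≤ T → F (s - t) - F s = t * c)
    (himp : ∃ t, 0 < t ∧ t ≤ T ∧ F (s - t) < F s) :
    ∀ t, 0 < t → t ≤ T → F (s - T) ≤ F (s - t) := by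
  obtain ⟨t₀, ht₀, ht₀T, hlt⟩ := himp
  have hc : c < 0 := by
    have := hF t₀ ht₀ ht₀T
    nlinarith
  intro t ht htT
  have hT := hF T (ht.trans_le htT) le_rfl
  have ht := hF t ht htT
  nlinarith [mul_le_mul_of_nonpos_right htT hc.le]

theorem stmt6_general (n j : ℕ) (P α β : ℕ → ℝ) (D s : ℝ)
    (hP : ∀ i, 1 ≤ i → i ≤ n → 0 < P i)
    (hj1 : 1 ≤ j) (hjn : j ≤ n)
    (hearly : ∀ i, 1 ≤ i → i < j → s + ∑ l ∈ Finset.Icc 1 i, P l ≤ D)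
    (F : ℝ → ℝ)
    (hF : ∀ t : ℝ, F t = ∑ i ∈ Finset.Icc 1 n,
        (α i * max 0 (D - (t + ∑ l ∈ Finset.Icc 1 i, P l)) +
          β i * max 0 ((t + ∑ l ∈ Finset.Icc 1 i, P l) - D))) :
    (∀ t : ℝ, 0 < t → t ≤ min s ((s + ∑ l ∈ Finset.Icc 1 j, P l) - D) →
        F (s - t) - F s =
          t * ((∑ i ∈ Finset.Icc 1 (j - 1), α i) - ∑ i ∈ Finset.Icc j n, β i)) ∧
      ((∃ t : ℝ, 0 < t ∧ t ≤ min s ((s + ∑ l ∈ Finset.Icc 1 j, P l) - D) ∧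
          F (s - t) < F s) →
        ∀ t : ℝ, 0 < t → t ≤ min s ((s + ∑ l ∈ Finset.Icc 1 j, P l) - D) →
          F (s - min s ((s + ∑ l ∈ Finset.Icc 1 j, P l) - D)) ≤ F (s - t)) := by
  set S : ℕ → ℝ := fun i => ∑ l ∈ Icc 1 i, P l
  have hblocks : ∀ t, F t = ∑ i ∈ Icc 1 (j - 1), penalty (α i) (β i) D (t + S i) +
      ∑ i ∈ Icc j n, penalty (α i) (β i) D (t + S i) := by
    intro t
    rw [hF, sum_Icc_eq_sum_Icc_add_sum_Icc _ (by omega : 1 ≤ j - 1 + 1) (by omega : j - 1 ≤ n),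
      Nat.sub_add_cancel hj1]
    rfl
  have hshift : ∀ t, 0 < t → t ≤ min s (s + S j - D) →
      F (s - t) - F s = t * ((∑ i ∈ Icc 1 (j - 1), α i) - ∑ i ∈ Icc j n, β i) := by
    intro t ht htle
    have hE : ∀ i ∈ Icc 1 (j - 1), s + S i ≤ D := fun i hi =>
      hearly i (mem_Icc.1 hi).1 (by have := (mem_Icc.1 hi).2; omega)
    have hL : ∀ i ∈ Icc j n, D ≤ s + S i - t := fun i hi => by
      have := sum_Icc_one_le_sum_Icc_one hP (mem_Icc.1 hi).1 (mem_Icc.1 hi).2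
      have := htle.trans (min_le_right _ _)
      linarith
    simp only [hblocks, sub_add_eq_add_sub]
    rw [sum_penalty_sub_of_early _ α β (fun i => s + S i) hE ht.le,
      sum_penalty_sub_of_tardy _ α β (fun i => s + S i) hL ht.le]
    ring
  exact ⟨hshift, le_of_sub_eq_mul_of_exists_lt hshift⟩

/-- If at start time `s` jobs `1,…,j-1` are early or on time and
jobs `j,…,n` are strictly tardy, then a left shift by `t ∈ (0, min s (C_j - D)]`
changes the total penalty by `t * (∑_{i<j} α i - ∑_{i≥j} β i)`; consequently, if
some shift in this range improves the solution, the maximal shift gives the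
greatest improvement. -/
theorem stmt6 (n j : ℕ) (P α β : ℕ → ℝ) (D s : ℝ)
    (hP : ∀ i, 1 ≤ i → i ≤ n → 0 < P i)
    (hα : ∀ i, 1 ≤ i → i ≤ n → 0 < α i)
    (hβ : ∀ i, 1 ≤ i → i ≤ n → 0 < β i)
    (hs : 0 ≤ s)
    (hj1 : 1 ≤ j) (hjn : j ≤ n)
    (hearly : ∀ i, 1 ≤ i → i < j → s + ∑ l ∈ Finset.Icc 1 i, P l ≤ D)
    (htardy : ∀ i, j ≤ i → i ≤ n → s + ∑ l ∈ Finset.Icc 1 i, P l > D)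
    (F : ℝ → ℝ)
    (hF : ∀ t : ℝ, F t = ∑ i ∈ Finset.Icc 1 n,
        (α i * max 0 (D - (t + ∑ l ∈ Finset.Icc 1 i, P l)) +
          β i * max 0 ((t + ∑ l ∈ Finset.Icc 1 i, P l) - D))) :
    (∀ t : ℝ, 0 < t → t ≤ min s ((s + ∑ l ∈ Finset.Icc 1 j, P l) - D) →
        F (s - t) - F s =
          t * ((∑ i ∈ Finset.Icc 1 (j - 1), α i) - ∑ i ∈ Finset.Icc j n, β i)) ∧
      ((∃ t : ℝ, 0 < t ∧ t ≤ min s ((s + ∑ l ∈ Finset.Icc 1 j, P l) - D) ∧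
          F (s - t) < F s) →
        ∀ t : ℝ, 0 < t → t ≤ min s ((s + ∑ l ∈ Finset.Icc 1 j, P l) - D) →
          F (s - min s ((s + ∑ l ∈ Finset.Icc 1 j, P l) - D)) ≤ F (s - t)) :=
  stmt6_general n j P α β D s hP hj1 hjn hearly F hF
end

section
/- With start time s and first early-to-tardy transition at job j (jobs i < j satisfy C_i(s) ≤ D, jobs i ≥ j satisfy C_i(s) > D), the condition Σ_{i<j} α_i ≥ Σ_{i≥j} β_i implies that no left shift (decrease of s) can strictly decrease the total penalty F. -/
/-!
As a function of the start time, the cost of job `i` is convex and piecewise linear with slope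
`-α i` while the job is early and `β i` while it is tardy. So at `s` these one-sided slopes are
subgradients, and summing the subgradient inequalities gives
`F s' ≥ F s + (∑_{i ≥ j} β i - ∑_{i < j} α i) * (s' - s)`,
whose second term is `≥ 0` for `s' < s`.
-/

open Finset

noncomputable def earlyTardyCost (a b D C : ℝ) : ℝ := a * max 0 (D - C) + b * max 0 (C - D)

lemma earlyTardyCost_sub_mul_le_of_le {a b D C : ℝ} (ha : 0 ≤ a) (hb : 0 ≤ b) (hC : C ≤ D)
    (C' : ℝ) : earlyTardyCost a b D C - a * (C' - C) ≤ earlyTardyCost a b D C' := by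
  have hearly : a * (D - C') ≤ a * max 0 (D - C') := by gcongr; exact le_max_right _ _
  have htardy : 0 ≤ b * max 0 (C' - D) := mul_nonneg hb (le_max_left _ _)
  rw [earlyTardyCost, earlyTardyCost, max_eq_right (sub_nonneg.2 hC),
    max_eq_left (sub_nonpos.2 hC)]
  linarith

lemma earlyTardyCost_add_mul_le_of_ge {a b D C : ℝ} (ha : 0 ≤ a) (hb : 0 ≤ b) (hC : D ≤ C)
    (C' : ℝ) : earlyTardyCost a b D C + b * (C' - C) ≤ earlyTardyCost a b D C' := by
  have hearly : 0 ≤ a * max 0 (D - C') := mul_nonneg ha (le_max_left _ _)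
  have htardy : b * (C' - D) ≤ b * max 0 (C' - D) := by gcongr; exact le_max_right _ _
  rw [earlyTardyCost, earlyTardyCost, max_eq_left (sub_nonpos.2 hC),
    max_eq_right (sub_nonneg.2 hC)]
  linarith

lemma sum_earlyTardyCost_add_mul_le {ι : Type*} (S : Finset ι) (early : ι → Prop)
    [DecidablePred early] (a b c : ι → ℝ) (D s t : ℝ)
    (ha : ∀ i ∈ S, 0 ≤ a i) (hb : ∀ i ∈ S, 0 ≤ b i)
    (hearly : ∀ i ∈ S, early i → s + c i ≤ D)
    (htardy : ∀ i ∈ S, ¬ early i → D ≤ s + c i) :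
    ∑ i ∈ S, earlyTardyCost (a i) (b i) D (s + c i)
        + (∑ i ∈ S, if early i then -a i else b i) * (t - s)
      ≤ ∑ i ∈ S, earlyTardyCost (a i) (b i) D (t + c i) := by
  rw [sum_mul, ← sum_add_distrib]
  refine sum_le_sum fun i hi => ?_
  have hshift : t + c i - (s + c i) = t - s := by ring
  split_ifs with h
  · have := earlyTardyCost_sub_mul_le_of_le (ha i hi) (hb i hi) (hearly i hi h) (t + c i)
    rw [hshift] at this
    linarith
  · have := earlyTardyCost_add_mul_le_of_ge (ha i hi) (hb i hi) (htardy i hi h) (t + c i)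
    rwa [hshift] at this

lemma sum_Icc_ite_lt_eq {M : Type*} [AddCommGroup M] (f g : ℕ → M) {n j : ℕ}
    (hj1 : 1 ≤ j) (hjn : j ≤ n + 1) :
    ∑ i ∈ Icc 1 n, (if i < j then -f i else g i)
      = ∑ i ∈ Icc j n, g i - ∑ i ∈ Icc 1 (j - 1), f i := by
  have hlow : Icc 1 (j - 1) = Ico 1 j := by ext; simp only [mem_Icc, mem_Ico]; omega
  rw [hlow, ← Ico_add_one_right_eq_Icc 1 n, ← Ico_add_one_right_eq_Icc j n,
    ← sum_Ico_consecutive _ hj1 hjn, sub_eq_neg_add, ← sum_neg_distrib]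
  congr 1
  · exact sum_congr rfl fun i hi => if_pos (mem_Ico.1 hi).2
  · exact sum_congr rfl fun i hi => if_neg (mem_Ico.1 hi).1.not_gt

theorem stmt7_general (n j : ℕ) (P α β : ℕ → ℝ) (D s : ℝ)
    (hα : ∀ i, 1 ≤ i → i ≤ n → 0 < α i)
    (hβ : ∀ i, 1 ≤ i → i ≤ n → 0 < β i)
    (hj1 : 1 ≤ j) (hjn : j ≤ n)
    (hearly : ∀ i, 1 ≤ i → i < j → s + ∑ l ∈ Finset.Icc 1 i, P l ≤ D)
    (htardy : ∀ i, j ≤ i → i ≤ n → s + ∑ l ∈ Finset.Icc 1 i, P l > D)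
    (F : ℝ → ℝ)
    (hF : ∀ t : ℝ, F t = ∑ i ∈ Finset.Icc 1 n,
        (α i * max 0 (D - (t + ∑ l ∈ Finset.Icc 1 i, P l)) +
          β i * max 0 ((t + ∑ l ∈ Finset.Icc 1 i, P l) - D)))
    (hcond : (∑ i ∈ Finset.Icc 1 (j - 1), α i) ≥ ∑ i ∈ Finset.Icc j n, β i) :
    ∀ s' : ℝ, 0 ≤ s' → s' < s → ¬ F s' < F s := by
  intro s' _ hs's
  have hsubgrad : F s + (∑ i ∈ Icc 1 n, if i < j then -α i else β i) * (s' - s) ≤ F s' := by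
    rw [hF, hF]
    exact sum_earlyTardyCost_add_mul_le _ _ α β (fun i => ∑ l ∈ Icc 1 i, P l) D s s'
      (fun i hi => (hα i (mem_Icc.1 hi).1 (mem_Icc.1 hi).2).le)
      (fun i hi => (hβ i (mem_Icc.1 hi).1 (mem_Icc.1 hi).2).le)
      (fun i hi h => hearly i (mem_Icc.1 hi).1 h)
      (fun i hi h => (htardy i (not_lt.1 h) (mem_Icc.1 hi).2).le)
  have hslope : ∑ i ∈ Icc 1 n, (if i < j then -α i else β i) ≤ 0 := by
    rw [sum_Icc_ite_lt_eq α β hj1 (by omega)]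
    linarith
  rw [not_lt]
  linarith [mul_nonneg_of_nonpos_of_nonpos hslope (sub_nonpos.2 hs's.le)]

/-- If at start time `s` the first early-to-tardy transition is at
job `j` and `∑_{i<j} α i ≥ ∑_{i≥j} β i`, then no left shift can strictly
decrease the total penalty `F`. -/
theorem stmt7 (n j : ℕ) (P α β : ℕ → ℝ) (D s : ℝ)
    (hP : ∀ i, 1 ≤ i → i ≤ n → 0 < P i)
    (hα : ∀ i, 1 ≤ i → i ≤ n → 0 < α i)
    (hβ : ∀ i, 1 ≤ i → i ≤ n → 0 < β i)
    (hs0 : 0 ≤ s) (hsD : s ≤ D - P 1)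
    (hj1 : 1 ≤ j) (hjn : j ≤ n)
    (hearly : ∀ i, 1 ≤ i → i < j → s + ∑ l ∈ Finset.Icc 1 i, P l ≤ D)
    (htardy : ∀ i, j ≤ i → i ≤ n → s + ∑ l ∈ Finset.Icc 1 i, P l > D)
    (F : ℝ → ℝ)
    (hF : ∀ t : ℝ, F t = ∑ i ∈ Finset.Icc 1 n,
        (α i * max 0 (D - (t + ∑ l ∈ Finset.Icc 1 i, P l)) +
          β i * max 0 ((t + ∑ l ∈ Finset.Icc 1 i, P l) - D)))
    (hcond : (∑ i ∈ Finset.Icc 1 (j - 1), α i) ≥ ∑ i ∈ Finset.Icc j n, β i) :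
    ∀ s' : ℝ, 0 ≤ s' → s' < s → ¬ F s' < F s :=
  stmt7_general n j P α β D s hα hβ hj1 hjn hearly htardy F hF hcond
end

section
/- For the single-machine problem with a fixed sequence, the optimal total penalty equals min over j ∈ {0,1,...,n} of F(max{0, D − S_j}) where S_j = Σ_{l≤j} P_l (S_0 = 0); that is, it suffices to evaluate F at start times making some job complete exactly at D, together with start time 0. -/
/-! Every job contributes a hinge `a * max 0 (c - s) + b * max 0 (s - c)` with its kink at
`c = D - S i`, so between two consecutive candidate start times `F` is affine and its value
at an intermediate point is at least the smaller endpoint value. Beyond the largest candidate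
`F` has slope `∑ β ≥ 0`, and before the smallest positive candidate slope `-∑ α ≤ 0`; since the
candidates `max 0 (D - S j)` contain every kink that lies in `[0, ∞)`, the minimum over `[0, ∞)`
is attained at one of them. -/

lemma min_le_of_sub_mul_eq {f : ℝ → ℝ} {u s v : ℝ} (hus : u ≤ s) (hsv : s ≤ v)
    (h : (v - u) * f s = (v - s) * f u + (s - u) * f v) : min (f u) (f v) ≤ f s := by
  rcases hus.eq_or_lt with rfl | hus
  · exact min_le_left _ _
  have hu := mul_le_mul_of_nonneg_left (min_le_left (f u) (f v)) (sub_nonneg.2 hsv)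
  have hv := mul_le_mul_of_nonneg_left (min_le_right (f u) (f v)) (sub_nonneg.2 hus.le)
  nlinarith

def hingePenalty (a b c s : ℝ) : ℝ := a * max 0 (c - s) + b * max 0 (s - c)

section hingePenalty

variable {a b c u s v : ℝ}

lemma hingePenalty_of_le (h : c ≤ s) : hingePenalty a b c s = b * (s - c) := by
  simp [hingePenalty, h]

lemma hingePenalty_of_ge (h : s ≤ c) : hingePenalty a b c s = a * (c - s) := by
  simp [hingePenalty, h]

lemma hingePenalty_interpolate (hc : c ≤ u ∨ v ≤ c) (hus : u ≤ s) (hsv : s ≤ v) :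
    (v - u) * hingePenalty a b c s =
      (v - s) * hingePenalty a b c u + (s - u) * hingePenalty a b c v := by
  rcases hc with hc | hc
  · rw [hingePenalty_of_le hc, hingePenalty_of_le (hc.trans hus),
      hingePenalty_of_le (hc.trans (hus.trans hsv))]
    ring
  · rw [hingePenalty_of_ge hc, hingePenalty_of_ge (hsv.trans hc),
      hingePenalty_of_ge ((hus.trans hsv).trans hc)]
    ring

lemma hingePenalty_le_of_le (hb : 0 ≤ b) (hc : c ≤ u) (hus : u ≤ s) :
    hingePenalty a b c u ≤ hingePenalty a b c s := by
  rw [hingePenalty_of_le hc, hingePenalty_of_le (hc.trans hus)]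
  exact mul_le_mul_of_nonneg_left (by linarith) hb

lemma hingePenalty_le_of_ge (ha : 0 ≤ a) (hc : v ≤ c) (hsv : s ≤ v) :
    hingePenalty a b c v ≤ hingePenalty a b c s := by
  rw [hingePenalty_of_ge hc, hingePenalty_of_ge (hsv.trans hc)]
  exact mul_le_mul_of_nonneg_left (by linarith) ha

end hingePenalty

def totalPenalty {ι : Type*} (I : Finset ι) (a b c : ι → ℝ) (s : ℝ) : ℝ :=
  ∑ i ∈ I, hingePenalty (a i) (b i) (c i) s

section totalPenalty

variable {ι : Type*} {I : Finset ι} {a b c : ι → ℝ} {u s v : ℝ}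

lemma totalPenalty_interpolate (hc : ∀ i ∈ I, c i ≤ u ∨ v ≤ c i) (hus : u ≤ s) (hsv : s ≤ v) :
    (v - u) * totalPenalty I a b c s =
      (v - s) * totalPenalty I a b c u + (s - u) * totalPenalty I a b c v := by
  simp only [totalPenalty, Finset.mul_sum, ← Finset.sum_add_distrib]
  exact Finset.sum_congr rfl fun i hi => hingePenalty_interpolate (hc i hi) hus hsv

lemma totalPenalty_le_of_le (hb : ∀ i ∈ I, 0 ≤ b i) (hc : ∀ i ∈ I, c i ≤ u) (hus : u ≤ s) :
    totalPenalty I a b c u ≤ totalPenalty I a b c s :=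
  Finset.sum_le_sum fun i hi => hingePenalty_le_of_le (hb i hi) (hc i hi) hus

lemma totalPenalty_le_of_ge (ha : ∀ i ∈ I, 0 ≤ a i) (hc : ∀ i ∈ I, v ≤ c i) (hsv : s ≤ v) :
    totalPenalty I a b c v ≤ totalPenalty I a b c s :=
  Finset.sum_le_sum fun i hi => hingePenalty_le_of_ge (ha i hi) (hc i hi) hsv

theorem exists_mem_totalPenalty_le (ha : ∀ i ∈ I, 0 ≤ a i) (hb : ∀ i ∈ I, 0 ≤ b i)
    {T : Finset ℝ} (hT : T.Nonempty) (hcT : ∀ i ∈ I, max 0 (c i) ∈ T) (hs : 0 ≤ s) :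
    ∃ t ∈ T, totalPenalty I a b c t ≤ totalPenalty I a b c s := by
  set L := T.filter (· ≤ s)
  set R := T.filter (s < ·)
  -- As `0 ≤ s`, no kink lies strictly between `max L` and `min R` (or beyond an empty side).
  have hkink : ∀ i ∈ I, (∃ t ∈ L, c i ≤ t) ∨ c i ∈ R := by
    intro i hi
    rcases le_or_gt (max 0 (c i)) s with h | h
    · exact .inl ⟨_, Finset.mem_filter.2 ⟨hcT i hi, h⟩, le_max_right _ _⟩
    · have hsc : s < c i := (lt_max_iff.1 h).resolve_left hs.not_gt
      exact .inr (Finset.mem_filter.2 ⟨max_eq_right (hs.trans hsc.le) ▸ hcT i hi, hsc⟩)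
  have hLs (hL : L.Nonempty) : L.max' hL ≤ s := (Finset.mem_filter.1 (L.max'_mem hL)).2
  have hsR (hR : R.Nonempty) : s < R.min' hR := (Finset.mem_filter.1 (R.min'_mem hR)).2
  rcases L.eq_empty_or_nonempty with hL | hL <;> rcases R.eq_empty_or_nonempty with hR | hR
  · obtain ⟨t, ht⟩ := hT
    exact absurd (lt_of_not_ge (Finset.filter_eq_empty_iff.1 hL ht))
      (Finset.filter_eq_empty_iff.1 hR ht)
  · refine ⟨R.min' hR, Finset.mem_of_mem_filter _ (R.min'_mem hR), ?_⟩
    refine totalPenalty_le_of_ge ha (fun i hi => ?_) (hsR hR).le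
    exact R.min'_le _ ((hkink i hi).resolve_left (by simp [hL]))
  · refine ⟨L.max' hL, Finset.mem_of_mem_filter _ (L.max'_mem hL), ?_⟩
    refine totalPenalty_le_of_le hb (fun i hi => ?_) (hLs hL)
    obtain ⟨t, ht, hct⟩ := (hkink i hi).resolve_right (by simp [hR])
    exact hct.trans (L.le_max' t ht)
  · have hsep : ∀ i ∈ I, c i ≤ L.max' hL ∨ R.min' hR ≤ c i := fun i hi =>
      (hkink i hi).imp (fun ⟨t, ht, hct⟩ => hct.trans (L.le_max' t ht)) (R.min'_le _)
    have hmin := min_le_of_sub_mul_eq (f := totalPenalty I a b c) (hLs hL) (hsR hR).le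
      (totalPenalty_interpolate hsep (hLs hL) (hsR hR).le)
    rcases min_choice (totalPenalty I a b c (L.max' hL)) (totalPenalty I a b c (R.min' hR))
      with h | h <;> rw [h] at hmin
    · exact ⟨_, Finset.mem_of_mem_filter _ (L.max'_mem hL), hmin⟩
    · exact ⟨_, Finset.mem_of_mem_filter _ (R.min'_mem hR), hmin⟩

theorem isLeast_totalPenalty_image_Ici (ha : ∀ i ∈ I, 0 ≤ a i) (hb : ∀ i ∈ I, 0 ≤ b i)
    {T : Finset ℝ} (hT : T.Nonempty) (hT0 : ∀ t ∈ T, 0 ≤ t) (hcT : ∀ i ∈ I, max 0 (c i) ∈ T) :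
    IsLeast (totalPenalty I a b c '' Set.Ici 0) (T.inf' hT (totalPenalty I a b c)) := by
  refine ⟨?_, ?_⟩
  · obtain ⟨t, ht, heq⟩ := T.exists_mem_eq_inf' hT (totalPenalty I a b c)
    exact ⟨t, hT0 t ht, heq.symm⟩
  · rintro _ ⟨s, hs, rfl⟩
    obtain ⟨t, ht, hle⟩ := exists_mem_totalPenalty_le ha hb hT hcT hs
    exact (T.inf'_le _ ht).trans hle

end totalPenalty

theorem stmt13_general (n : ℕ) (P α β : ℕ → ℝ) (D : ℝ)
    (hα : ∀ i, 1 ≤ i → i ≤ n → 0 < α i)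
    (hβ : ∀ i, 1 ≤ i → i ≤ n → 0 < β i)
    (F : ℝ → ℝ)
    (hF : ∀ s : ℝ, F s = ∑ i ∈ Finset.Icc 1 n,
        (α i * max 0 (D - (s + ∑ l ∈ Finset.Icc 1 i, P l)) +
          β i * max 0 ((s + ∑ l ∈ Finset.Icc 1 i, P l) - D))) :
    IsLeast (F '' Set.Ici (0 : ℝ))
      ((Finset.Icc 0 n).inf' (Finset.nonempty_Icc.mpr (Nat.zero_le n))
        (fun j => F (max 0 (D - ∑ l ∈ Finset.Icc 1 j, P l)))) := by
  set S : ℕ → ℝ := fun j => ∑ l ∈ Finset.Icc 1 j, P l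
  have hF' : F = totalPenalty (Finset.Icc 1 n) α β (fun i => D - S i) := by
    funext s
    rw [hF]
    refine Finset.sum_congr rfl fun i _ => ?_
    rw [hingePenalty, sub_add_eq_sub_sub_swap, sub_sub_eq_add_sub]
  have hT := (Finset.nonempty_Icc.mpr (Nat.zero_le n)).image fun j => max 0 (D - S j)
  have key := isLeast_totalPenalty_image_Ici (I := Finset.Icc 1 n) (a := α) (b := β)
    (fun i hi => (hα i (Finset.mem_Icc.1 hi).1 (Finset.mem_Icc.1 hi).2).le)
    (fun i hi => (hβ i (Finset.mem_Icc.1 hi).1 (Finset.mem_Icc.1 hi).2).le) hT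
    (by simp) fun i hi =>
      Finset.mem_image_of_mem _ (Finset.Icc_subset_Icc_left (Nat.zero_le 1) hi)
  rw [Finset.inf'_image, ← hF'] at key
  exact key

/-- For a fixed sequence, the minimum of the total penalty `F`
over all start times `s ≥ 0` equals the minimum of `F (max 0 (D - S j))` over
`j ∈ {0,…,n}`: it suffices to evaluate `F` at start times making some job
complete exactly at `D`, together with start time `0`. -/
theorem stmt13 (n : ℕ) (P α β : ℕ → ℝ) (D : ℝ)
    (hP : ∀ i, 1 ≤ i → i ≤ n → 0 < P i)
    (hα : ∀ i, 1 ≤ i → i ≤ n → 0 < α i)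
    (hβ : ∀ i, 1 ≤ i → i ≤ n → 0 < β i)
    (hD : 0 < D)
    (F : ℝ → ℝ)
    (hF : ∀ s : ℝ, F s = ∑ i ∈ Finset.Icc 1 n,
        (α i * max 0 (D - (s + ∑ l ∈ Finset.Icc 1 i, P l)) +
          β i * max 0 ((s + ∑ l ∈ Finset.Icc 1 i, P l) - D))) :
    IsLeast (F '' Set.Ici (0 : ℝ))
      ((Finset.Icc 0 n).inf' (Finset.nonempty_Icc.mpr (Nat.zero_le n))
        (fun j => F (max 0 (D - ∑ l ∈ Finset.Icc 1 j, P l)))) :=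
  stmt13_general n P α β D hα hβ F hF
end
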